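/- Let X₁, X₂ and Y be Polish spaces with their Borel σ-algebras, and let Q : Multiset (X₁ ⊕ X₂) → Multiset Y. Suppose there are functions q₁ : Y → X₁ and q₂ : Y → X₂ such that: (1) for every n ∈ ℕ there exists a set M(n) ⊆ ℕ × ℕ with (0,0) ∉ M(n) whenever n > 0, such that for every D ∈ Multiset (X₁ ⊕ X₂) and every y ∈ Y, the multiplicity of y in Q(D) equals n if and only if the pair (multiplicity of Sum.inl (q₁ y) in D, multiplicity of Sum.inr (q₂ y) in D) belongs to M(n); (2) q₁ and q₂ are injective and continuous; and (3) for every Borel set F ⊆ Y, the images q₁(F) ⊆ X₁ and q₂(F) ⊆ X₂ are Borel. Then Q is measurable with respect to the counting σ-algebra on Multiset (X₁ ⊕ X₂) (for the sum measurable structure on X₁ ⊕ X₂) and the counting σ-algebra on Multiset Y. -/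

import Mathlib

/-!
By hypothesis (1), `(Q D).count y = f (D.count (inl (q₁ y)), D.count (inr (q₂ y)))` for a single
function `f` with `f (0, 0) = 0`, so the count of `Q D` in a Borel set `F ⊆ Y` is a finite sum of
these values over `y ∈ F`. Cut `Y` into the `2 ^ m`
measurable cells determined by the first `m` sets of a countable separating family. Summing over
the cells `f` of the counts of `D` in `inl '' (q₁ '' (F ∩ cell))` and `inr '' (q₂ '' (F ∩ cell))`
gives a measurable function of `D`, since these images are measurable; once `m` separates the
finitely many points `y` with a nonzero profile, each cell holds at most one of them and the sum is
exactly the count. So the count is a pointwise limit of measurable functions.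
-/

/- `countIn D E` is the number of elements of the finite multiset `D` lying in the set `E`,
counted with multiplicity. -/
open Classical in
noncomputable def countIn {X : Type*} (D : Multiset X) (E : Set X) : ℕ :=
  (D.filter (· ∈ E)).card

/-- The counting σ-algebra on the space of finite multisets over a measurable space `X`:
generated by the counting events `C(E,n) = {D | countIn D E = n}` for `E` measurable, `n : ℕ`. -/
def countingMS (X : Type*) [MeasurableSpace X] : MeasurableSpace (Multiset X) :=
  MeasurableSpace.generateFrom
    {C : Set (Multiset X) |
      ∃ (E : Set X) (n : ℕ), MeasurableSet E ∧ C = {D : Multiset X | countIn D E = n}}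

open Filter Function MeasureTheory

open Classical in
theorem countIn_image_eq_sum {X Y : Type*} [DecidableEq X] {φ : Y → X} (hφ : Injective φ)
    (D : Multiset X) (S : Set Y) (T : Finset Y) (hT : ∀ y ∈ S, D.count (φ y) ≠ 0 → y ∈ T) :
    countIn D (φ '' S) = ∑ y ∈ T with y ∈ S, D.count (φ y) := by
  have hsupp : ∀ x ∈ D.filter (· ∈ φ '' S), x ∈ (T.filter (· ∈ S)).image φ := by
    rintro x hx
    obtain ⟨hxD, y, hyS, rfl⟩ := Multiset.mem_filter.1 hx
    exact Finset.mem_image_of_mem φ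
      (Finset.mem_filter.2 ⟨hT y hyS (Multiset.count_ne_zero.2 hxD), hyS⟩)
  rw [countIn, ← Multiset.sum_count_eq_card hsupp, Finset.sum_image hφ.injOn]
  refine Finset.sum_congr rfl fun y hy => Multiset.count_filter_of_pos ?_
  exact Set.mem_image_of_mem φ (Finset.mem_filter.1 hy).2

theorem Finset.sum_apply_sum_fiberwise_of_injOn {ι κ A B : Type*} [Fintype κ] [DecidableEq κ]
    [AddCommMonoid A] [AddCommMonoid B] {s : Finset ι} {π : ι → κ} (hπ : Set.InjOn π s)
    (g : ι → A) {f : A → B} (hf : f 0 = 0) :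
    ∑ j, f (∑ i ∈ s with π i = j, g i) = ∑ i ∈ s, f (g i) := by
  rw [← Finset.sum_fiberwise s π fun i => f (g i)]
  refine Finset.sum_congr rfl fun j _ => ?_
  have hfiber : (s.filter (π · = j)).card ≤ 1 := Finset.card_le_one.2 fun a ha b hb => by
    simp only [Finset.mem_filter] at ha hb
    exact hπ ha.1 hb.1 (ha.2.trans hb.2.symm)
  rcases Nat.le_one_iff_eq_zero_or_eq_one.1 hfiber with h | h
  · simp [Finset.card_eq_zero.1 h, hf]
  · obtain ⟨a, ha⟩ := Finset.card_eq_one.1 h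
    simp [ha]

theorem eventually_injOn_restrict_fin {β : Type*} {s : Set (ℕ → β)} (hs : s.Finite) :
    ∀ᶠ m in atTop, s.InjOn fun (x : ℕ → β) (k : Fin m) => x k := by
  simp only [Set.InjOn, hs.eventually_all]
  intro x _ y _
  by_cases hxy : x = y
  · exact Eventually.of_forall fun _ _ => hxy
  obtain ⟨k, hk⟩ := Function.ne_iff.1 hxy
  filter_upwards [eventually_gt_atTop k] with m hm h
  exact absurd (congrFun h ⟨k, hm⟩) hk

theorem measurable_countIn {X : Type*} [MeasurableSpace X] {E : Set X} (hE : MeasurableSet E) :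
    Measurable[countingMS X] fun D => countIn D E :=
  let := countingMS X
  measurable_to_countable' fun n => MeasurableSpace.measurableSet_generateFrom ⟨E, n, hE, rfl⟩

theorem finite_setOf_count_ne_zero {X Y : Type*} [DecidableEq X] {φ : Y → X} (hφ : Injective φ)
    (D : Multiset X) :
    {y | D.count (φ y) ≠ 0}.Finite := by
  simpa [Multiset.count_ne_zero] using D.finite_toSet.preimage hφ.injOn

section
variable {X Y : Type*} [DecidableEq X] [DecidableEq Y] {Q : Multiset X → Multiset Y}
  {φ₁ φ₂ : Y → X} {f : ℕ × ℕ → ℕ}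

theorem countIn_eq_sum_cells {κ : Type*} [Fintype κ] [DecidableEq κ] (hf : f 0 = 0)
    (hQ : ∀ D y, (Q D).count y = f (D.count (φ₁ y), D.count (φ₂ y)))
    (hφ₁ : Injective φ₁) (hφ₂ : Injective φ₂) (D : Multiset X) (F : Set Y) (T : Finset Y)
    (hT : ∀ y, (D.count (φ₁ y), D.count (φ₂ y)) ≠ 0 → y ∈ T) {π : Y → κ}
    (hπ : Set.InjOn π T) :
    countIn (Q D) F =
      ∑ j, f (countIn D (φ₁ '' (F ∩ π ⁻¹' {j})), countIn D (φ₂ '' (F ∩ π ⁻¹' {j}))) := by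
  classical
  have hTQ : ∀ y ∈ F, (Q D).count y ≠ 0 → y ∈ T := fun y _ h =>
    hT y fun h0 => h (by rw [hQ, h0, hf])
  have hT₁ (S : Set Y) : ∀ y ∈ S, D.count (φ₁ y) ≠ 0 → y ∈ T := fun y _ h => hT y (by simp [h])
  have hT₂ (S : Set Y) : ∀ y ∈ S, D.count (φ₂ y) ≠ 0 → y ∈ T := fun y _ h => hT y (by simp [h])
  conv_lhs => rw [← Set.image_id F, countIn_image_eq_sum injective_id (Q D) F T hTQ]
  simp_rw [countIn_image_eq_sum hφ₁ D _ T (hT₁ _), countIn_image_eq_sum hφ₂ D _ T (hT₂ _),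
    prod_mk_sum, Set.mem_inter_iff, Set.mem_preimage, Set.mem_singleton_iff, ← Finset.filter_filter]
  rw [Finset.sum_apply_sum_fiberwise_of_injOn
    (hπ.mono (Finset.coe_subset.2 (Finset.filter_subset _ _))) _ hf]
  simp [hQ]

variable [MeasurableSpace X] [MeasurableSpace Y] [MeasurableSpace.CountablySeparated Y]

theorem measurable_countIn_of_count_eq (hf : f 0 = 0)
    (hQ : ∀ D y, (Q D).count y = f (D.count (φ₁ y), D.count (φ₂ y)))
    (hφ₁ : Injective φ₁) (hφ₂ : Injective φ₂)
    (hφ₁m : ∀ F, MeasurableSet F → MeasurableSet (φ₁ '' F))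
    (hφ₂m : ∀ F, MeasurableSet F → MeasurableSet (φ₂ '' F)) {F : Set Y} (hF : MeasurableSet F) :
    Measurable[countingMS X] fun D => countIn (Q D) F := by
  let := countingMS X
  obtain ⟨e, he, he_inj⟩ := MeasurableSpace.measurable_injection_nat_bool_of_countablySeparated Y
  let π : (m : ℕ) → Y → Fin m → Bool := fun m y k => e y k
  have hπ (m : ℕ) : Measurable (π m) := measurable_pi_lambda _ fun _ => he.eval
  refine measurable_of_tendsto_metrizable (f := fun m D => ∑ σ, f
      (countIn D (φ₁ '' (F ∩ π m ⁻¹' {σ})), countIn D (φ₂ '' (F ∩ π m ⁻¹' {σ}))))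
    (fun m => ?_) (tendsto_pi_nhds.2 fun D => ?_)
  · refine Finset.measurable_sum _ fun σ _ => (measurable_of_countable f).comp ?_
    have hcell : MeasurableSet (F ∩ π m ⁻¹' {σ}) := hF.inter (hπ m (measurableSet_singleton σ))
    exact (measurable_countIn (hφ₁m _ hcell)).prodMk (measurable_countIn (hφ₂m _ hcell))
  · have hfin : {y | (D.count (φ₁ y), D.count (φ₂ y)) ≠ 0}.Finite := by
      refine ((finite_setOf_count_ne_zero hφ₁ D).union
        (finite_setOf_count_ne_zero hφ₂ D)).subset fun y hy => ?_
      simp only [Set.mem_ofPred_eq, Set.mem_union, ne_eq, Prod.mk_eq_zero, not_and_or] at hy ⊢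
      exact hy
    refine tendsto_const_nhds.congr' ?_
    filter_upwards [eventually_injOn_restrict_fin (hfin.image e)] with m hm
    exact countIn_eq_sum_cells hf hQ hφ₁ hφ₂ D F hfin.toFinset (fun _ => hfin.mem_toFinset.2)
      (π := π m) ((hm.comp he_inj.injOn (Set.mapsTo_image e _)).mono hfin.coe_toFinset.subset)

theorem measurable_of_count_eq (hf : f 0 = 0)
    (hQ : ∀ D y, (Q D).count y = f (D.count (φ₁ y), D.count (φ₂ y)))
    (hφ₁ : Injective φ₁) (hφ₂ : Injective φ₂)
    (hφ₁m : ∀ F, MeasurableSet F → MeasurableSet (φ₁ '' F))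
    (hφ₂m : ∀ F, MeasurableSet F → MeasurableSet (φ₂ '' F)) :
    Measurable[countingMS X, countingMS Y] Q := by
  let := countingMS X
  refine measurable_generateFrom ?_
  rintro _ ⟨F, n, hF, rfl⟩
  exact measurable_countIn_of_count_eq hf hQ hφ₁ hφ₂ hφ₁m hφ₂m hF (measurableSet_singleton n)

end

open Classical in
theorem qcrit_measurable_general {X₁ X₂ Y : Type*}
    [MeasurableSpace X₁] [MeasurableSpace X₂]
    [TopologicalSpace Y] [PolishSpace Y] [MeasurableSpace Y] [BorelSpace Y]
    (Q : Multiset (X₁ ⊕ X₂) → Multiset Y) (q₁ : Y → X₁) (q₂ : Y → X₂)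
    (M : ℕ → Set (ℕ × ℕ))
    (hM : ∀ n : ℕ, 0 < n → (0, 0) ∉ M n)
    (hQ : ∀ (D : Multiset (X₁ ⊕ X₂)) (y : Y) (n : ℕ),
      (Q D).count y = n ↔
        (D.count (Sum.inl (q₁ y)), D.count (Sum.inr (q₂ y))) ∈ M n)
    (hq₁inj : Function.Injective q₁) (hq₂inj : Function.Injective q₂)
    (hq₁img : ∀ F : Set Y, MeasurableSet F → MeasurableSet (q₁ '' F))
    (hq₂img : ∀ F : Set Y, MeasurableSet F → MeasurableSet (q₂ '' F)) :
    @Measurable _ _ (countingMS (X₁ ⊕ X₂)) (countingMS Y) Q := by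
  -- `hQ` makes `{k | p ∈ M k}` the singleton of the count whenever `p` is a realised profile.
  set f : ℕ × ℕ → ℕ := fun p => sInf {k | p ∈ M k}
  have hf : f 0 = 0 := by
    by_contra h
    have hpos := Nat.pos_of_ne_zero h
    exact hM _ hpos (Nat.sInf_mem (Nat.nonempty_of_pos_sInf hpos))
  have hQf (D : Multiset (X₁ ⊕ X₂)) (y : Y) :
      (Q D).count y = f (D.count (Sum.inl (q₁ y)), D.count (Sum.inr (q₂ y))) := by
    simp only [f, ← hQ D y, Set.ofPred_eq_eq_singleton', csInf_singleton]
  refine measurable_of_count_eq hf hQf (Sum.inl_injective.comp hq₁inj)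
    (Sum.inr_injective.comp hq₂inj) (fun F hF => ?_) (fun F hF => ?_)
  · rw [← Set.image_image]
    exact measurableSet_inl_image.2 (hq₁img F hF)
  · rw [← Set.image_image]
    exact measurableSet_inr_image.2 (hq₂img F hF)

open Classical in
theorem qcrit_measurable {X₁ X₂ Y : Type*}
    [TopologicalSpace X₁] [PolishSpace X₁] [MeasurableSpace X₁] [BorelSpace X₁]
    [TopologicalSpace X₂] [PolishSpace X₂] [MeasurableSpace X₂] [BorelSpace X₂]
    [TopologicalSpace Y] [PolishSpace Y] [MeasurableSpace Y] [BorelSpace Y]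
    (Q : Multiset (X₁ ⊕ X₂) → Multiset Y) (q₁ : Y → X₁) (q₂ : Y → X₂)
    (M : ℕ → Set (ℕ × ℕ))
    (hM : ∀ n : ℕ, 0 < n → (0, 0) ∉ M n)
    (hQ : ∀ (D : Multiset (X₁ ⊕ X₂)) (y : Y) (n : ℕ),
      (Q D).count y = n ↔
        (D.count (Sum.inl (q₁ y)), D.count (Sum.inr (q₂ y))) ∈ M n)
    (hq₁inj : Function.Injective q₁) (hq₂inj : Function.Injective q₂)
    (hq₁cont : Continuous q₁) (hq₂cont : Continuous q₂)
    (hq₁img : ∀ F : Set Y, MeasurableSet F → MeasurableSet (q₁ '' F))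
    (hq₂img : ∀ F : Set Y, MeasurableSet F → MeasurableSet (q₂ '' F)) :
    @Measurable _ _ (countingMS (X₁ ⊕ X₂)) (countingMS Y) Q :=
  qcrit_measurable_general Q q₁ q₂ M hM hQ hq₁inj hq₂inj hq₁img hq₂img
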